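/- Let a₁, a₂, α₁, α₂, β₁, β₂, γ₁, γ₂, ξ₁, ξ₂, ξ₃, ξ₄ be real numbers with a₁ ≠ 0, a₂ ≠ 0, a₁² ≠ a₂², satisfying the case L6 conditions. Let C, D ∈ ℝ with D ≠ 0 and define the transformed coefficients a₁' = D³a₁, a₂' = D³a₂, α₁' = D²(α₁ + C(a₁+a₂)), α₂' = D²α₂, β₁' = D²(β₁ + C(a₁+a₂)), β₂' = D²β₂, γ₁' = D²(γ₁ + 2Ca₁), γ₂' = D²(γ₂ + 2Ca₂), ξ₁' = Dξ₁ + (1/2)CD[3C(a₁+a₂) + γ₁ + γ₂ + 2(α₁ − α₂ + β₁)], ξ₂' = Dξ₂ + (1/2)CD[3C(a₁+a₂) + γ₁ + γ₂ + 2(α₁ + α₂ + β₁)], ξ₃' = Dξ₃ + (1/2)CD[C(a₁−a₂) + γ₁ − γ₂ + 2β₂], ξ₄' = Dξ₄ + (1/2)CD[C(a₁−a₂) + γ₁ − γ₂ − 2β₂]. Then the primed coefficients again satisfy the case L6 conditions. Thus the subclass L6 is invariant under restricted Möbius transformations u ↦ u/(Cu+D). -/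
import Mathlib


/-- The case L6 linearizability conditions for the quad-equation `Q₊`. -/
def CaseL6 (a₁ a₂ α₁ α₂ β₁ β₂ γ₁ γ₂ ξ₁ ξ₂ ξ₃ ξ₄ : ℝ) : Prop :=
  α₂ = -β₂ ∧ α₁ = β₁ ∧ a₁ = 2 * a₂ ∧
  γ₁ = 4 * β₁ / 3 ∧ γ₂ = 2 * β₁ / 3 ∧
  ξ₁ = (3 * β₁ ^ 2 + 2 * β₂ * β₁ + β₂ ^ 2) / (6 * a₂) ∧
  ξ₂ = (3 * β₁ ^ 2 - 2 * β₂ * β₁ + β₂ ^ 2) / (6 * a₂) ∧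
  ξ₃ = (β₁ ^ 2 + 6 * β₂ * β₁ + 7 * β₂ ^ 2) / (18 * a₂) ∧
  ξ₄ = (β₁ ^ 2 - 6 * β₂ * β₁ + 7 * β₂ ^ 2) / (18 * a₂)

/-- The subclass L6 is invariant under the restricted Möbius transformations
`u ↦ u/(Cu+D)`, acting on the coefficients of `Q₊` in the standard way. -/
theorem caseL6_moebius_invariant
    (a₁ a₂ α₁ α₂ β₁ β₂ γ₁ γ₂ ξ₁ ξ₂ ξ₃ ξ₄ : ℝ)
    (ha₁ : a₁ ≠ 0) (ha₂ : a₂ ≠ 0) (ha : a₁ ^ 2 ≠ a₂ ^ 2)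
    (hcase : CaseL6 a₁ a₂ α₁ α₂ β₁ β₂ γ₁ γ₂ ξ₁ ξ₂ ξ₃ ξ₄)
    (C D : ℝ) (hD : D ≠ 0) :
    CaseL6
        (D ^ 3 * a₁) (D ^ 3 * a₂)
        (D ^ 2 * (α₁ + C * (a₁ + a₂))) (D ^ 2 * α₂)
        (D ^ 2 * (β₁ + C * (a₁ + a₂))) (D ^ 2 * β₂)
        (D ^ 2 * (γ₁ + 2 * C * a₁)) (D ^ 2 * (γ₂ + 2 * C * a₂))
        (D * ξ₁ + 1 / 2 * C * D *
          (3 * C * (a₁ + a₂) + γ₁ + γ₂ + 2 * (α₁ - α₂ + β₁)))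
        (D * ξ₂ + 1 / 2 * C * D *
          (3 * C * (a₁ + a₂) + γ₁ + γ₂ + 2 * (α₁ + α₂ + β₁)))
        (D * ξ₃ + 1 / 2 * C * D * (C * (a₁ - a₂) + γ₁ - γ₂ + 2 * β₂))
        (D * ξ₄ + 1 / 2 * C * D * (C * (a₁ - a₂) + γ₁ - γ₂ - 2 * β₂)) := by
  obtain ⟨h1,h2,h3,h4,h5,h6,h7,h8,h9⟩ := hcase
  subst h1 h2 h3 h4 h5 h6 h7 h8 h9
  refine ⟨by ring, by ring, by ring, by ring, by ring, ?_, ?_, ?_, ?_⟩ <;>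
    · field_simp
      ring
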